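/- arXiv:1810.09140 — 2 statements merged into one kernel-verified Lean document; each statement's English description precedes it below -/
import Mathlib

section
/- For an idempotent measure μ on a compact Hausdorff space X with density d_μ, one has μ(φ) = max_{x∈X}(d_μ(x) + φ(x)) for all φ ∈ C(X); that is, every idempotent measure is recovered from its density. -/
/-!
The inequality `d_μ(x) + φ(x) ≤ μ(φ)` holds pointwise: `ψ = (φ - φ(x)) ⊓ 0` is admissible in the
infimum defining `d_μ(x)`, and `φ(x) + ψ ≤ φ`. For the reverse inequality, if it failed at every
point, each `x` would have a `ψ_x ≤ 0` vanishing at `x` with `φ(x) + μ(ψ_x) < μ(φ)`; a constant shift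
of `ψ_x` then exceeds `φ` near `x` and still has measure `< μ(φ)`. By compactness finitely many of these
shifts cover `X`, and since `μ` commutes with finite maxima, their maximum is a function `≥ φ` of
measure `< μ(φ)`, contradicting monotonicity of `μ`.
-/

open Topology

noncomputable section

def IsIdempotentMeasure {Z : Type*} [TopologicalSpace Z] (μ : C(Z, ℝ) → ℝ) : Prop :=
  μ 1 = 1 ∧ (∀ (c : ℝ) (φ : C(Z, ℝ)), μ (ContinuousMap.const Z c + φ) = c + μ φ) ∧
    ∀ φ ψ : C(Z, ℝ), μ (φ ⊔ ψ) = max (μ φ) (μ ψ)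

abbrev IM (Z : Type*) [TopologicalSpace Z] : Type _ :=
  {μ : C(Z, ℝ) → ℝ // IsIdempotentMeasure μ}

def density {Z : Type*} [TopologicalSpace Z] (μ : C(Z, ℝ) → ℝ) (z : Z) : EReal :=
  ⨅ φ : {φ : C(Z, ℝ) // φ ≤ 0 ∧ φ z = 0}, ((μ φ.1 : ℝ) : EReal)

def pushforward {X Y : Type*} [TopologicalSpace X] [TopologicalSpace Y]
    (f : C(X, Y)) (μ : C(X, ℝ) → ℝ) : C(Y, ℝ) → ℝ :=
  fun ψ => μ (ψ.comp f)

def mpComb {τ : Type*} (α : EReal) (a b : τ → ℝ) : τ → ℝ :=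
  fun t => ((α + (a t : EReal)) ⊔ ((b t : ℝ) : EReal)).toReal

def MaxPlusConvex {τ : Type*} (A : Set (τ → ℝ)) : Prop :=
  ∀ a ∈ A, ∀ b ∈ A, ∀ α : EReal, α ≤ 0 → mpComb α a b ∈ A

def projCM {T : Type*} (A : Set (T → ℝ)) (t : T) : C(A, ℝ) :=
  ⟨fun a => a.1 t, (continuous_apply t).comp continuous_subtype_val⟩

def tilde {Z : Type*} [TopologicalSpace Z] (φ : C(Z, ℝ)) : C(IM Z, ℝ) :=
  ⟨fun ν => ν.1 φ, (continuous_apply φ).comp continuous_subtype_val⟩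

section

variable {Z : Type*} [TopologicalSpace Z] {μ : C(Z, ℝ) → ℝ}

namespace IsIdempotentMeasure

theorem map_const_add (hμ : IsIdempotentMeasure μ) (c : ℝ) (φ : C(Z, ℝ)) :
    μ (ContinuousMap.const Z c + φ) = c + μ φ :=
  hμ.2.1 c φ

theorem map_sup (hμ : IsIdempotentMeasure μ) (φ ψ : C(Z, ℝ)) : μ (φ ⊔ ψ) = μ φ ⊔ μ ψ :=
  hμ.2.2 φ ψ

theorem monotone (hμ : IsIdempotentMeasure μ) : Monotone μ := fun φ ψ h => by
  simpa [sup_eq_right.mpr h] using (hμ.map_sup φ ψ).ge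

theorem map_finset_sup' (hμ : IsIdempotentMeasure μ) {ι : Type*} {s : Finset ι}
    (hs : s.Nonempty) (f : ι → C(Z, ℝ)) : μ (s.sup' hs f) = s.sup' hs (μ ∘ f) :=
  Finset.apply_sup'_eq_sup'_comp hs μ hμ.map_sup

/-- On the empty space `const 1 + 0 = 0`, which is incompatible with `μ (const 1 + 0) = 1 + μ 0`. -/
theorem nonempty (hμ : IsIdempotentMeasure μ) : Nonempty Z := by
  by_contra hZ
  rw [not_nonempty_iff] at hZ
  have h := hμ.map_const_add 1 0
  rw [Subsingleton.elim (ContinuousMap.const Z 1 + 0) 0] at h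
  linarith

end IsIdempotentMeasure

theorem density_le_of_nonpos_of_apply_eq_zero {ψ : C(Z, ℝ)} {x : Z} (hψ : ψ ≤ 0)
    (hx : ψ x = 0) : density μ x ≤ ((μ ψ : ℝ) : EReal) :=
  iInf_le (fun ψ : {ψ : C(Z, ℝ) // ψ ≤ 0 ∧ ψ x = 0} => ((μ ψ.1 : ℝ) : EReal)) ⟨ψ, hψ, hx⟩

theorem density_lt_coe_iff {x : Z} {c : ℝ} :
    density μ x < (c : EReal) ↔ ∃ ψ : C(Z, ℝ), ψ ≤ 0 ∧ ψ x = 0 ∧ μ ψ < c := by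
  simp only [density, iInf_lt_iff, EReal.coe_lt_coe_iff, Subtype.exists, exists_prop, and_assoc]

theorem IsIdempotentMeasure.density_add_le (hμ : IsIdempotentMeasure μ) (φ : C(Z, ℝ))
    (x : Z) : density μ x + (φ x : EReal) ≤ ((μ φ : ℝ) : EReal) := by
  set ψ : C(Z, ℝ) := (φ - ContinuousMap.const Z (φ x)) ⊓ 0
  have hψ_le : ContinuousMap.const Z (φ x) + ψ ≤ φ := ContinuousMap.le_def.mpr fun y => by
    simp only [ψ, ContinuousMap.add_apply, ContinuousMap.const_apply, ContinuousMap.inf_apply,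
      ContinuousMap.sub_apply, ContinuousMap.coe_zero, Pi.zero_apply]
    linarith [inf_le_left (a := φ y - φ x) (b := (0 : ℝ))]
  have hdensity : density μ x ≤ ((μ ψ : ℝ) : EReal) :=
    density_le_of_nonpos_of_apply_eq_zero inf_le_right (by simp [ψ])
  have hmeasure : μ ψ + φ x ≤ μ φ := by
    simpa [hμ.map_const_add, add_comm] using hμ.monotone hψ_le
  calc density μ x + (φ x : EReal) ≤ ((μ ψ + φ x : ℝ) : EReal) := by
        rw [EReal.coe_add]; exact add_le_add_left hdensity _
    _ ≤ ((μ φ : ℝ) : EReal) := EReal.coe_le_coe_iff.mpr hmeasure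

end

section

variable {X : Type*} [TopologicalSpace X] [CompactSpace X] {μ : C(X, ℝ) → ℝ}

theorem IsIdempotentMeasure.lt_of_forall_exists_apply_lt (hμ : IsIdempotentMeasure μ)
    {φ : C(X, ℝ)} {c : ℝ} (h : ∀ x, ∃ g : C(X, ℝ), φ x < g x ∧ μ g < c) : μ φ < c := by
  choose g hφg hgc using h
  obtain ⟨t, ht⟩ := CompactSpace.elim_nhds_subcover (fun x => {y | φ y < g x y})
    fun x => (isOpen_lt φ.continuous (g x).continuous).mem_nhds (hφg x)
  have hcover : ∀ y, ∃ x ∈ t, φ y < g x y := fun y => by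
    simpa using (Set.eq_univ_iff_forall.mp ht y)
  have ht_ne : t.Nonempty := by
    obtain ⟨y⟩ := hμ.nonempty
    obtain ⟨x, hx, -⟩ := hcover y
    exact ⟨x, hx⟩
  have hφ_le : φ ≤ t.sup' ht_ne g := ContinuousMap.le_def.mpr fun y => by
    obtain ⟨x, hx, hy⟩ := hcover y
    rw [ContinuousMap.sup'_apply]
    exact hy.le.trans (Finset.le_sup' (fun x => g x y) hx)
  calc μ φ ≤ μ (t.sup' ht_ne g) := hμ.monotone hφ_le
    _ = t.sup' ht_ne (μ ∘ g) := hμ.map_finset_sup' ht_ne g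
    _ < c := (Finset.sup'_lt_iff ht_ne).mpr fun x _ => hgc x

theorem IsIdempotentMeasure.exists_le_density_add (hμ : IsIdempotentMeasure μ)
    (φ : C(X, ℝ)) : ∃ x, ((μ φ : ℝ) : EReal) ≤ density μ x + (φ x : EReal) := by
  by_contra! h
  refine (hμ.lt_of_forall_exists_apply_lt (φ := φ) (c := μ φ) fun x => ?_).false
  have hx : density μ x < ((μ φ - φ x : ℝ) : EReal) := by
    rw [EReal.coe_sub, EReal.lt_sub_iff_add_lt (.inl (EReal.coe_ne_bot _))
      (.inl (EReal.coe_ne_top _))]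
    exact h x
  obtain ⟨ψ, hψ, hψx, hμψ⟩ := density_lt_coe_iff.mp hx
  obtain ⟨r, hφr, hr⟩ := exists_between (lt_sub_comm.mp hμψ)
  refine ⟨ContinuousMap.const X r + ψ, by simpa [hψx] using hφr, ?_⟩
  rw [hμ.map_const_add]
  linarith

end

theorem idempotentMeasure_eq_sup_density_general {X : Type*} [TopologicalSpace X] [CompactSpace X]
    (μ : C(X, ℝ) → ℝ) (hμ : IsIdempotentMeasure μ) :
    ∀ φ : C(X, ℝ), ((μ φ : ℝ) : EReal) = (⨆ x : X, density μ x + (φ x : EReal)) ∧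
      ∃ x : X, ((μ φ : ℝ) : EReal) = density μ x + (φ x : EReal) := by
  intro φ
  obtain ⟨x, hx⟩ := hμ.exists_le_density_add φ
  refine ⟨le_antisymm ?_ (iSup_le fun y => hμ.density_add_le φ y), x, le_antisymm hx ?_⟩
  · exact hx.trans (le_iSup (fun y => density μ y + (φ y : EReal)) x)
  · exact hμ.density_add_le φ x

theorem idempotentMeasure_eq_sup_density {X : Type*} [TopologicalSpace X] [CompactSpace X]
    [T2Space X] (μ : C(X, ℝ) → ℝ) (hμ : IsIdempotentMeasure μ) :
    ∀ φ : C(X, ℝ), ((μ φ : ℝ) : EReal) = (⨆ x : X, density μ x + (φ x : EReal)) ∧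
      ∃ x : X, ((μ φ : ℝ) : EReal) = density μ x + (φ x : EReal) :=
  idempotentMeasure_eq_sup_density_general μ hμ
end
end

section
/- The functor of idempotent measures preserves preimages: for a continuous map f: X → Y between compact Hausdorff spaces and a closed subset B ⊆ Y, an idempotent measure μ ∈ IX satisfies If(μ) ∈ IB if and only if μ ∈ I(f⁻¹(B)). -/
open Topology

noncomputable section

lemma idem_mono {Z : Type*} [TopologicalSpace Z] {μ : C(Z, ℝ) → ℝ}
    (hμ : IsIdempotentMeasure μ) {φ ψ : C(Z, ℝ)} (h : φ ≤ ψ) : μ φ ≤ μ ψ := by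
  have h1 := hμ.2.2 φ ψ
  rw [sup_eq_right.mpr h] at h1
  rw [h1]
  exact le_max_left _ _

/-- Key construction: from a function φ on X which is > -1 on the fiber over y,
produce an admissible test function ψ on Y with controlled value. -/
lemma key_step {X Y : Type*} [TopologicalSpace X] [CompactSpace X] [T2Space X]
    [TopologicalSpace Y] [CompactSpace Y] [T2Space Y] (f : C(X, Y)) (y : Y)
    {μ : C(X, ℝ) → ℝ} (hμ : IsIdempotentMeasure μ) (φ : C(X, ℝ))
    (hK : ∀ x, f x = y → -1 < φ x) :
    ∃ ψ : C(Y, ℝ), ψ ≤ 0 ∧ ψ y = 0 ∧ μ (ψ.comp f) ≤ 1 + μ φ := by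
  set U : Set X := {x | -1 < φ x} with hU
  have hUopen : IsOpen U := isOpen_lt continuous_const φ.continuous
  set C : Set Y := f '' Uᶜ with hC
  have hCclosed : IsClosed C :=
    ((hUopen.isClosed_compl.isCompact).image f.continuous).isClosed
  have hyC : y ∉ C := by
    rintro ⟨x, hx, hfx⟩
    exact hx (hK x hfx)
  obtain ⟨g, hg0, hg1, hg01⟩ := exists_continuous_zero_one_of_isClosed hCclosed
    isClosed_singleton (Set.disjoint_singleton_right.mpr hyC)
  set c : ℝ := ‖φ‖ with hc
  have hc0 : 0 ≤ c := norm_nonneg _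
  refine ⟨c • g - ContinuousMap.const Y c, ?_, ?_, ?_⟩
  · rw [ContinuousMap.le_def]
    intro y'
    show c * g y' - c ≤ 0
    nlinarith [(hg01 y').2]
  · simp [hg1 rfl]
  · have hle : (c • g - ContinuousMap.const Y c).comp f ≤ ContinuousMap.const X 1 + φ := by
      rw [ContinuousMap.le_def]
      intro x
      show c * g (f x) - c ≤ 1 + φ x
      by_cases hx : -1 < φ x
      · nlinarith [(hg01 (f x)).2]
      · have hfx : f x ∈ C := ⟨x, hx, rfl⟩
        have hgz : g (f x) = 0 := hg0 hfx
        rw [hgz, mul_zero, zero_sub]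
        have h1 : |φ x| ≤ c := by
          simpa [hc] using φ.norm_coe_le_norm x
        have := neg_abs_le (φ x)
        linarith
    calc μ ((c • g - ContinuousMap.const Y c).comp f) ≤ μ (ContinuousMap.const X 1 + φ) :=
          idem_mono hμ hle
      _ = 1 + μ φ := hμ.2.1 1 φ

theorem pushforward_preserves_preimages {X Y : Type*} [TopologicalSpace X] [CompactSpace X]
    [T2Space X] [TopologicalSpace Y] [CompactSpace Y] [T2Space Y] (f : C(X, Y))
    (B : Set Y) (hB : IsClosed B) (μ : C(X, ℝ) → ℝ) (hμ : IsIdempotentMeasure μ) :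
    (∀ y ∉ B, density (pushforward f μ) y = ⊥) ↔
      (∀ x ∉ f ⁻¹' B, density μ x = ⊥) := by
  constructor
  · intro h x hx
    have h1 := h (f x) hx
    refine le_antisymm ?_ bot_le
    rw [← h1, density, density]
    refine le_iInf fun ψ => ?_
    refine iInf_le_of_le ⟨ψ.1.comp f, fun x' => ψ.2.1 (f x'), by simpa using ψ.2.2⟩ ?_
    exact le_refl _
  · intro h y hy
    -- it suffices to show density < r for every real r
    have main : ∀ r : ℝ, density (pushforward f μ) y < (r : EReal) := by
      intro r
      set M : ℝ := r - 1 with hM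
      -- fiber over y
      set K : Set X := f ⁻¹' {y} with hKdef
      have hKcompact : IsCompact K :=
        (isClosed_singleton.preimage f.continuous).isCompact
      -- choose test functions at each point of the fiber
      have hchoice : ∀ x : K, ∃ φ : C(X, ℝ), φ ≤ 0 ∧ φ (x : X) = 0 ∧ μ φ < M := by
        rintro ⟨x, hx⟩
        have hx' : f x = y := hx
        have hxB : x ∉ f ⁻¹' B := fun hmem => hy (hx' ▸ hmem)
        have hd := h x hxB
        rw [density, iInf_eq_bot] at hd
        obtain ⟨i, hi⟩ := hd (M : EReal) (EReal.bot_lt_coe M)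
        exact ⟨i.1, i.2.1, i.2.2, EReal.coe_lt_coe_iff.mp hi⟩
      choose Φ hΦle hΦ0 hΦM using hchoice
      -- find φ with μ φ < M and φ > -1 on the fiber
      have hφex : ∃ φ : C(X, ℝ), μ φ < M ∧ ∀ x, f x = y → -1 < φ x := by
        rcases K.eq_empty_or_nonempty with hKe | hKne
        · refine ⟨ContinuousMap.const X (min M 0 - 1), ?_, ?_⟩
          · have : μ (ContinuousMap.const X (min M 0 - 1)) = min M 0 - 1 := by
              have h0 : μ (0 : C(X, ℝ)) = 0 := by
                have h1 := hμ.2.1 1 0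
                rw [add_zero] at h1
                have : (ContinuousMap.const X (1:ℝ)) = (1 : C(X, ℝ)) := rfl
                rw [this, hμ.1] at h1
                linarith
              have h2 := hμ.2.1 (min M 0 - 1) 0
              rw [add_zero, h0, add_zero] at h2
              exact h2
            rw [this]
            have := min_le_left M 0
            linarith
          · intro x hfx
            exfalso
            have : x ∈ K := by simp [hKdef, hfx]
            rw [hKe] at this
            exact this
        · -- open cover of the fiber
          set U : K → Set X := fun i => (Φ i) ⁻¹' Set.Ioi (-1) with hUdef
          have hUopen : ∀ i, IsOpen (U i) := fun i => isOpen_Ioi.preimage (Φ i).continuous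
          have hcover : K ⊆ ⋃ i, U i := by
            intro x hx
            refine Set.mem_iUnion.mpr ⟨⟨x, hx⟩, ?_⟩
            simp [hUdef, hΦ0 ⟨x, hx⟩]
          obtain ⟨t, ht⟩ := hKcompact.elim_finite_subcover U hUopen hcover
          have htne : t.Nonempty := by
            obtain ⟨z, hz⟩ := hKne
            obtain ⟨i, hit, _⟩ := Set.mem_iUnion₂.mp (ht hz)
            exact ⟨i, hit⟩
          refine ⟨t.sup' htne Φ, ?_, ?_⟩
          · refine Finset.sup'_induction (p := fun c => μ c < M) htne Φ ?_ ?_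
            · intro a ha b hb
              rw [hμ.2.2 a b]
              exact max_lt ha hb
            · intro b _
              exact hΦM b
          · intro x hfx
            have hxK : x ∈ K := by simp [hKdef, hfx]
            obtain ⟨i, hit, hxU⟩ := Set.mem_iUnion₂.mp (ht hxK)
            have hle : Φ i ≤ t.sup' htne Φ := Finset.le_sup' Φ hit
            have : (-1 : ℝ) < Φ i x := hxU
            exact lt_of_lt_of_le this (hle x)
      obtain ⟨φ, hφM, hφK⟩ := hφex
      obtain ⟨ψ, hψle, hψ0, hψμ⟩ := key_step f y hμ φ hφK
      have hlt : μ (ψ.comp f) < r := by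
        have : 1 + μ φ < 1 + M := by linarith
        calc μ (ψ.comp f) ≤ 1 + μ φ := hψμ
          _ < 1 + M := this
          _ = r := by rw [hM]; ring
      calc density (pushforward f μ) y ≤ ((μ (ψ.comp f) : ℝ) : EReal) :=
            iInf_le _ (⟨ψ, hψle, hψ0⟩ : {ψ' : C(Y, ℝ) // ψ' ≤ 0 ∧ ψ' y = 0})
        _ < (r : EReal) := EReal.coe_lt_coe_iff.mpr hlt
    -- conclude that the density is ⊥
    obtain ⟨d, hd⟩ : ∃ d, density (pushforward f μ) y = d := ⟨_, rfl⟩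
    simp only [hd] at main ⊢
    induction d using EReal.rec with
    | bot => rfl
    | coe r => exact absurd (EReal.coe_lt_coe_iff.mp (main r)) (lt_irrefl r)
    | top => exact absurd (main 0) (not_lt.mpr le_top)
end
end
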